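/- Let F be a field of characteristic not 2 or 3, let a,b,c,d ∈ F give the integer-matrix binary cubic form f(x,y) = a·x³ + 3b·x²y + 3c·xy² + d·y³ with reduced discriminant disc(f) = a²d² − 3b²c² − 6abcd + 4ac³ + 4b³d, scaled Hessian h(x,y) = (ac−b²)x² + (ad−bc)xy + (bd−c²)y², and covariant g = f_x·h_y − f_y·h_x. Suppose x, y, z ∈ F satisfy z ≠ 0 and z³ = f(x,y). Then (g(x,y)/(6z³))² = (−h(x,y)/z²)³ + disc(f)/4; that is, the point (X, Y) = (−h(x,y)/z², g(x,y)/(6z³)) lies on the elliptic curve Y² = X³ + disc(f)/4. (This gives a degree-3 map from the genus-1 curve C_f : z³ = f(x,y) to the curve E_k : Y² = X³ + k with k = disc(f)/4.) -/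

import Mathlib

/-- The value `f(x,y)` of the integer-matrix binary cubic form with coefficients
`(a,b,c,d)`. -/
def cubicVal {F : Type*} [Field F] (a b c d x y : F) : F :=
  a * x ^ 3 + 3 * b * x ^ 2 * y + 3 * c * x * y ^ 2 + d * y ^ 3

/-- The value `h(x,y)` of the scaled Hessian of `f`. -/
def hessianVal {F : Type*} [Field F] (a b c d x y : F) : F :=
  (a * c - b ^ 2) * x ^ 2 + (a * d - b * c) * x * y + (b * d - c ^ 2) * y ^ 2

/-- The value `g(x,y) = (f_x·h_y − f_y·h_x)(x,y)` of the Jacobian covariant of `f`,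
where `f_x = 3a·x² + 6b·xy + 3c·y²`, `f_y = 3b·x² + 6c·xy + 3d·y²`,
`h_x = 2(ac−b²)x + (ad−bc)y`, and `h_y = (ad−bc)x + 2(bd−c²)y`. -/
def gVal {F : Type*} [Field F] (a b c d x y : F) : F :=
  (3 * a * x ^ 2 + 6 * b * x * y + 3 * c * y ^ 2)
      * ((a * d - b * c) * x + 2 * (b * d - c ^ 2) * y)
    - (3 * b * x ^ 2 + 6 * c * x * y + 3 * d * y ^ 2)
      * (2 * (a * c - b ^ 2) * x + (a * d - b * c) * y)

/-- The reduced discriminant `disc(f) = a²d² − 3b²c² − 6abcd + 4ac³ + 4b³d`. -/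
def cubicDisc {F : Type*} [Field F] (a b c d : F) : F :=
  a ^ 2 * d ^ 2 - 3 * b ^ 2 * c ^ 2 - 6 * a * b * c * d + 4 * a * c ^ 3 + 4 * b ^ 3 * d

/-- The classical syzygy of the binary cubic; on `z³ = f` it becomes the equation of `E_k`
after rescaling `(h, g)` by the weights `(z², z³)`. -/
theorem gVal_sq_eq {F : Type*} [Field F] (a b c d x y : F) :
    gVal a b c d x y ^ 2
      = -36 * hessianVal a b c d x y ^ 3 + 9 * cubicDisc a b c d * cubicVal a b c d x y ^ 2 := by
  unfold gVal hessianVal cubicDisc cubicVal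
  ring

theorem sq_div_eq_cube_div_add_of_sq_eq {F : Type*} [Field F] (h2 : (2 : F) ≠ 0)
    (h3 : (3 : F) ≠ 0) {G H D z : F} (hz : z ≠ 0) (h : G ^ 2 = -36 * H ^ 3 + 9 * D * z ^ 6) :
    (G / (6 * z ^ 3)) ^ 2 = (-H / z ^ 2) ^ 3 + D / 4 := by
  have h6 : (6 : F) ≠ 0 := by simpa [show (2 : F) * 3 = 6 by norm_num] using mul_ne_zero h2 h3
  have h4 : (4 : F) ≠ 0 := by simpa [show (2 : F) * 2 = 4 by norm_num] using mul_ne_zero h2 h2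
  field_simp
  linear_combination 4 * h

theorem point_on_Ek_of_cube {F : Type*} [Field F]
    (h2 : (2 : F) ≠ 0) (h3 : (3 : F) ≠ 0)
    (a b c d x y z : F) (hz : z ≠ 0) (hcube : z ^ 3 = cubicVal a b c d x y) :
    (gVal a b c d x y / (6 * z ^ 3)) ^ 2
      = (-hessianVal a b c d x y / z ^ 2) ^ 3 + cubicDisc a b c d / 4 := by
  refine sq_div_eq_cube_div_add_of_sq_eq h2 h3 hz ?_
  rw [gVal_sq_eq, ← hcube]
  ring
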